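/- In the two-allele Moran process on a line of size N, the number of 'boundaries' (adjacent positions with different types) is non-increasing under any copy-to-neighbor transition: if w' is obtained from w by setting w'(j) = w(i) for adjacent i, j (and w' agrees with w elsewhere), then the number of indices k with w'(k) ≠ w'(k+1) is at most the number of indices k with w(k) ≠ w(k+1). -/
import Mathlib


/-- The number of boundaries (adjacent positions with different types) of a
configuration `w` on a line of `N` positions. -/
def boundaryCount (N : ℕ) (w : ℕ → Bool) : ℕ :=
  ((Finset.range (N - 1)).filter fun k => w k ≠ w (k + 1)).card

lemma sum_two_le {s : Finset ℕ} {g g' : ℕ → ℕ} {a b : ℕ} (ha : a ∈ s) (hb : b ∈ s)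
    (hab : a ≠ b) (hoff : ∀ k ∈ s, k ≠ a → k ≠ b → g' k = g k)
    (h2 : g' a + g' b ≤ g a + g b) :
    ∑ k ∈ s, g' k ≤ ∑ k ∈ s, g k := by
  have hb' : b ∈ s.erase a := Finset.mem_erase.mpr ⟨hab.symm, hb⟩
  rw [← Finset.add_sum_erase s g' ha, ← Finset.add_sum_erase s g ha,
      ← Finset.add_sum_erase _ g' hb', ← Finset.add_sum_erase _ g hb']
  have heq : ∑ k ∈ (s.erase a).erase b, g' k = ∑ k ∈ (s.erase a).erase b, g k := by
    refine Finset.sum_congr rfl fun k hk => ?_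
    simp only [Finset.mem_erase] at hk
    exact hoff k hk.2.2 hk.2.1 hk.1
  omega

/-- In the two-allele Moran process on a line of size `N`, copying the type of
position `i` to an adjacent position `j` never increases the number of
boundaries. -/
theorem moran_boundaries_nonincreasing (N : ℕ) (w : ℕ → Bool) (i j : ℕ)
    (hadj : j = i + 1 ∨ i = j + 1) (hi : i < N) (hj : j < N) :
    boundaryCount N (Function.update w j (w i)) ≤ boundaryCount N w := by
  by_cases hw : w j = w i
  · rw [← hw, Function.update_eq_self]
  set w' := Function.update w j (w i) with hw'
  have hji : j ≠ i := fun h => hw (by rw [h])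
  have hwj : w' j = w i := Function.update_self j (w i) w
  have hoffv : ∀ k, k ≠ j → w' k = w k := fun k hk => Function.update_of_ne hk _ _
  unfold boundaryCount
  rw [Finset.card_filter, Finset.card_filter]
  set g : ℕ → ℕ := fun k => if w k ≠ w (k + 1) then 1 else 0 with hg
  set g' : ℕ → ℕ := fun k => if w' k ≠ w' (k + 1) then 1 else 0 with hg'
  have hoff : ∀ k, k + 1 ≠ j → k ≠ j → g' k = g k := by
    intro k h1 h2
    simp only [hg, hg', hoffv k h2, hoffv (k + 1) h1]
  have hgle : ∀ k, g k ≤ 1 ∧ g' k ≤ 1 := by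
    intro k; constructor <;> simp only [hg, hg'] <;> split <;> omega
  rcases hadj with h | h
  · -- j = i + 1
    subst h
    have hgi' : g' i = 0 := by
      have h1 : w' i = w i := hoffv i (by omega)
      simp [hg', h1, hwj]
    have hgi : g i = 1 := by
      have hne : w i ≠ w (i + 1) := fun h => hw h.symm
      simp [hg, hne]
    by_cases hN : i + 1 < N - 1
    · refine sum_two_le (a := i) (b := i + 1) (Finset.mem_range.mpr (by omega))
        (Finset.mem_range.mpr hN) (by omega) (fun k _ h1 h2 => hoff k (by omega) h2) ?_
      show g' i + g' (i + 1) ≤ g i + g (i + 1)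
      have := hgle (i + 1)
      omega
    · refine Finset.sum_le_sum fun k hk => ?_
      rw [Finset.mem_range] at hk
      show g' k ≤ g k
      by_cases hki : k = i
      · subst hki; omega
      · rw [hoff k (by omega) (by omega)]
  · -- i = j + 1
    subst h
    have hgj' : g' j = 0 := by
      have h1 : w' (j + 1) = w (j + 1) := hoffv (j + 1) (by omega)
      simp [hg', h1, hwj]
    have hgj : g j = 1 := by simp [hg, hw]
    rcases Nat.eq_zero_or_pos j with hj0 | hj0
    · subst hj0
      refine Finset.sum_le_sum fun k hk => ?_
      show g' k ≤ g k
      by_cases hk0 : k = 0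
      · subst hk0; omega
      · rw [hoff k (by omega) hk0]
    · refine sum_two_le (a := j - 1) (b := j) (Finset.mem_range.mpr (by omega))
        (Finset.mem_range.mpr (by omega)) (by omega)
        (fun k _ h1 h2 => hoff k (by omega) h2) ?_
      show g' (j - 1) + g' j ≤ g (j - 1) + g j
      have := hgle (j - 1)
      omega
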